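/- arXiv:math/0310275 — 4 statements merged into one kernel-verified Lean document; each statement's English description precedes it below -/
import Mathlib

section
/- For every integer ℓ ≥ 1, if H ∈ M_2(Z_p[[X]]) satisfies H·P_0 = p^ℓ·P_0·H, then H = 0. -/
open PowerSeries Filter Finset

noncomputable section

variable (p : ℕ) [Fact p.Prime]

/-- Substitution of a power series `g` (with zero constant coefficient in all our uses)
into a power series `f`: the coefficient of degree `j` of `f(g)` only involves the
monomials of `f` of degree `≤ j`. -/
def psSubst {A : Type*} [CommRing A] (g f : PowerSeries A) : PowerSeries A :=
  PowerSeries.mk fun j => ∑ i ∈ Finset.range (j + 1),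
    PowerSeries.coeff i f * PowerSeries.coeff j (g ^ i)

/-- The endomorphism `φ` of `A[[π]]`, substituting `(1+π)^p - 1` for `π`. -/
def phiA (A : Type*) [CommRing A] : PowerSeries A → PowerSeries A :=
  psSubst ((1 + PowerSeries.X) ^ p - 1)

/-- The binomial coefficient `binom(c, n)` for `c ∈ ℤ_p`, computed in `ℚ_p`. -/
def binomC (c : ℤ_[p]) (n : ℕ) : ℚ_[p] :=
  Polynomial.eval (c : ℚ_[p]) (descPochhammer ℚ_[p] n) / (n.factorial : ℚ_[p])

/-- The binomial power series `(1+π)^c = ∑_{n≥0} binom(c,n) π^n` for `c ∈ ℤ_p`. -/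
def onePlusPiPow (c : ℤ_[p]) : PowerSeries ℚ_[p] := PowerSeries.mk (binomC p c)

/-- The endomorphism `γ_c` of `ℚ_p[[π]]`, substituting `(1+π)^c - 1` for `π`. -/
def gammaQ (c : ℤ_[p]) : PowerSeries ℚ_[p] → PowerSeries ℚ_[p] :=
  psSubst (onePlusPiPow p c - 1)

/-- The partial products `∏_{n=0}^{N} φ^{2n+1}(q)/p` (whose limit is `λ₊`). -/
def partialPlus (q : PowerSeries ℚ_[p]) (N : ℕ) : PowerSeries ℚ_[p] :=
  ∏ n ∈ Finset.range (N + 1), (p : ℚ_[p])⁻¹ • (phiA p ℚ_[p])^[2 * n + 1] q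

/-- The partial products `∏_{n=0}^{N} φ^{2n}(q)/p` (whose limit is `λ₋`). -/
def partialMinus (q : PowerSeries ℚ_[p]) (N : ℕ) : PowerSeries ℚ_[p] :=
  ∏ n ∈ Finset.range (N + 1), (p : ℚ_[p])⁻¹ • (phiA p ℚ_[p])^[2 * n] q

/-- Convergence in `ℚ_p[[π]]` for the topology of coefficientwise convergence. -/
def CoeffTendsto (F : ℕ → PowerSeries ℚ_[p]) (L : PowerSeries ℚ_[p]) : Prop :=
  ∀ d : ℕ, Filter.Tendsto (fun N => PowerSeries.coeff d (F N))
    Filter.atTop (nhds (PowerSeries.coeff d L))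

/-- A power series with `ℚ_p` coefficients has all its coefficients in `ℤ_p`. -/
def IntSeries (f : PowerSeries ℚ_[p]) : Prop := ∀ n, ‖PowerSeries.coeff n f‖ ≤ 1

/-- Membership in the ring `R` of series `∑ a_i π^i` with `v_p(a_i) + i/(p-1) ≥ 0`,
expressed via norms: `‖a_i‖ ≤ p^{i/(p-1)}`. -/
def memR (f : PowerSeries ℚ_[p]) : Prop :=
  ∀ i : ℕ, ‖PowerSeries.coeff i f‖ ≤ (p : ℝ) ^ ((i : ℝ) / ((p : ℝ) - 1))

/-- The series `p^m λ₋^{k-1} λ₊^{-(k-1)}`, where `m = ⌊(k-2)/(p-1)⌋`. -/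
def zFull (k : ℕ) (lamPlus lamMinus : PowerSeries ℚ_[p]) : PowerSeries ℚ_[p] :=
  (p : PowerSeries ℚ_[p]) ^ ((k - 2) / (p - 1)) * lamMinus ^ (k - 1) * lamPlus⁻¹ ^ (k - 1)

/-- The truncation `z = z_0 + z_1 π + ⋯ + z_{k-2} π^{k-2}` of `p^m λ₋^{k-1} λ₊^{-(k-1)}`. -/
def zSeries (k : ℕ) (lamPlus lamMinus : PowerSeries ℚ_[p]) : PowerSeries ℚ_[p] :=
  PowerSeries.mk fun i =>
    if i ≤ k - 2 then PowerSeries.coeff i (zFull p k lamPlus lamMinus) else 0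

/-- The two-variable power series ring `ℚ_p[[π, X]]`, realized as `(ℚ_p[[π]])[[X]]`:
the inner variable is `π` and the outer variable is `X`. -/
abbrev PS2 := PowerSeries (PowerSeries ℚ_[p])

/-- `φ` extended to `ℚ_p[[π, X]]`, acting as before on `π` and trivially on `X`. -/
def phi2 : PS2 p → PS2 p := fun F =>
  PowerSeries.mk fun n => phiA p ℚ_[p] (PowerSeries.coeff n F)

/-- `γ_c` extended to `ℚ_p[[π, X]]`, acting as before on `π` and trivially on `X`. -/
def gamma2 (c : ℤ_[p]) : PS2 p → PS2 p := fun F =>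
  PowerSeries.mk fun n => gammaQ p c (PowerSeries.coeff n F)

/-- A two-variable power series has all its coefficients in `ℤ_p`,
i.e. lies in `ℤ_p[[π, X]]`. -/
def IntSeries2 (F : PS2 p) : Prop :=
  ∀ n j, ‖PowerSeries.coeff j (PowerSeries.coeff n F)‖ ≤ 1

/-- The element `π` of `ℚ_p[[π, X]]`. -/
def piVar : PS2 p := PowerSeries.C PowerSeries.X

/-- The matrix `P(X)` with rows `(0, -1)` and `(q^{k-1}, X·z)`. -/
def Pmat (k : ℕ) (q z : PowerSeries ℚ_[p]) : Matrix (Fin 2) (Fin 2) (PS2 p) :=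
  !![0, -1;
     PowerSeries.C (q ^ (k - 1)),
       PowerSeries.X * PowerSeries.C z]

/-- A matrix has entries in `ℤ_p[[π, X]]`. -/
def IntMat (H : Matrix (Fin 2) (Fin 2) (PS2 p)) : Prop := ∀ i j, IntSeries2 p (H i j)

/-- A matrix is `≡ Id mod π`, i.e. `H - Id ∈ π · M₂(ℤ_p[[π, X]])`. -/
def ModPiId (H : Matrix (Fin 2) (Fin 2) (PS2 p)) : Prop :=
  ∃ H' : Matrix (Fin 2) (Fin 2) (PS2 p), IntMat p H' ∧ H = 1 + piVar p • H'

/-- The conditions satisfied by the matrix `G_c(X)`: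
entries in `ℤ_p[[π,X]]`, `G ≡ Id mod π`, and `P(X)·φ(G) = G·γ_c(P(X))`. -/
def IsGmat (k : ℕ) (q z : PowerSeries ℚ_[p]) (c : ℤ_[p])
    (G : Matrix (Fin 2) (Fin 2) (PS2 p)) : Prop :=
  IntMat p G ∧ ModPiId p G ∧
    Pmat p k q z * G.map (phi2 p) = G * (Pmat p k q z).map (gamma2 p c)

/-- The matrix `P₀` with rows `(0, -1)` and `(p^{k-1}, p^m X)`, `m = ⌊(k-2)/(p-1)⌋`. -/
def P0mat (k : ℕ) : Matrix (Fin 2) (Fin 2) (PowerSeries ℤ_[p]) :=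
  !![0, -1;
     (p : PowerSeries ℤ_[p]) ^ (k - 1),
       (p : PowerSeries ℤ_[p]) ^ ((k - 2) / (p - 1)) * PowerSeries.X]

section Efield

variable (E : Type*) [NormedField E] [NormedAlgebra ℚ_[p] E] [IsUltrametricDist E]

/-- The ring of integers `O_E` of `E`: the elements of norm at most `1`. -/
def ringOfInt : Subring E where
  carrier := {x : E | ‖x‖ ≤ 1}
  zero_mem' := by simp
  one_mem' := by simp
  add_mem' {a b} ha hb := le_trans (IsUltrametricDist.norm_add_le_max a b) (max_le ha hb)
  neg_mem' {a} ha := by simpa using ha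
  mul_mem' {a b} ha hb := by
    have h := norm_mul a b
    simp only [Set.mem_setOf_eq] at *
    nlinarith [norm_nonneg a, norm_nonneg b]

/-- Evaluation `ev_α : ℚ_p[[π, X]] → E[[π]]` substituting `α` for `X`. -/
def evalX (α : E) (F : PS2 p) : PowerSeries E :=
  PowerSeries.mk fun j =>
    ∑' n : ℕ, algebraMap ℚ_[p] E
      (PowerSeries.coeff j (PowerSeries.coeff n F)) * α ^ n

/-- `γ_c` on `E[[π]]`: substitution of `(1+π)^c - 1` for `π` (coefficients mapped to `E`). -/
def gammaE (c : ℤ_[p]) : PowerSeries E → PowerSeries E :=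
  psSubst ((onePlusPiPow p c).map (algebraMap ℚ_[p] E) - 1)

end Efield

end

/-!
Iterating `H P₀ = q P₀ H` with `q = p^ℓ` gives `H P₀² = q² P₀² H`, and substituting the
Cayley–Hamilton relation `P₀² = tr P₀ · P₀ - det P₀` yields
`tr P₀ (q - q²) · P₀ H = det P₀ (1 - q²) · H`. Here `tr P₀ = p^m X` is divisible by `X`, while
`det P₀ (1 - q²) = p^{k-1}(1 - p^{2ℓ})` has nonzero constant term. Since `X` is prime, divisibility
of the entries of `H` by `X^N` thus propagates to `X^{N+1}`, so `H = 0`.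
-/

theorem mul_pow_eq_pow_smul_pow_mul {R A : Type*} [CommSemiring R] [Semiring A] [Algebra R A]
    {a b : A} {q : R} (h : a * b = q • (b * a)) (n : ℕ) :
    a * b ^ n = q ^ n • (b ^ n * a) := by
  induction n with
  | zero => simp
  | succ n ih =>
    calc a * b ^ (n + 1) = q ^ n • (b ^ n * (a * b)) := by
          rw [pow_succ, ← mul_assoc, ih, smul_mul_assoc, mul_assoc]
      _ = q ^ (n + 1) • (b ^ (n + 1) * a) := by
          rw [h, mul_smul_comm, smul_smul, ← pow_succ, ← mul_assoc, ← pow_succ]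

namespace Matrix

variable {R : Type*} [CommRing R]

theorem sq_fin_two_eq_trace_smul_sub_det_smul (M : Matrix (Fin 2) (Fin 2) R) :
    M ^ 2 = M.trace • M - M.det • 1 := by
  ext i j
  fin_cases i <;> fin_cases j <;>
    simp [sq, mul_apply, trace_fin_two, det_fin_two] <;> ring

theorem trace_mul_smul_mul_eq_det_mul_smul_of_mul_eq_smul_mul
    {M H : Matrix (Fin 2) (Fin 2) R} {q : R} (h : H * M = q • (M * H)) :
    (M.trace * (q - q ^ 2)) • (M * H) = (M.det * (1 - q ^ 2)) • H := by
  have h2 := mul_pow_eq_pow_smul_pow_mul h 2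
  rw [sq_fin_two_eq_trace_smul_sub_det_smul, Matrix.mul_sub, Matrix.sub_mul, mul_smul_comm,
    mul_smul_comm, smul_mul_assoc, smul_mul_assoc, Matrix.mul_one, Matrix.one_mul, h] at h2
  linear_combination (norm := module) h2

theorem eq_zero_of_smul_eq_X_smul_mul [IsDomain R] {n : Type*} [Fintype n]
    {d : R⟦X⟧} (hd : constantCoeff d ≠ 0) {A H : Matrix n n R⟦X⟧}
    (h : d • H = (X : R⟦X⟧) • (A * H)) : H = 0 := by
  have hXd : ¬ (X : R⟦X⟧) ∣ d := by rwa [X_dvd_iff]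
  have hdvd : ∀ N i j, X ^ N ∣ H i j := by
    intro N
    induction N with
    | zero => simp
    | succ N ih =>
      intro i j
      refine X_prime.pow_dvd_of_dvd_mul_left (N + 1) hXd ?_
      have hij := congrFun (congrFun h i) j
      simp only [smul_apply, smul_eq_mul] at hij
      rw [hij, pow_succ', mul_apply]
      exact mul_dvd_mul_left X (Finset.dvd_sum fun m _ => dvd_mul_of_dvd_right (ih m j) _)
  ext i j m
  exact X_pow_dvd_iff.mp (hdvd (m + 1) i j) m m.lt_succ_self

end Matrix

theorem statement11_general (p : ℕ) [Fact p.Prime] (k : ℕ)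
    (l : ℕ) (hl : 1 ≤ l)
    (H : Matrix (Fin 2) (Fin 2) (PowerSeries ℤ_[p]))
    (hH : H * P0mat p k = (p : PowerSeries ℤ_[p]) ^ l • (P0mat p k * H)) :
    H = 0 := by
  set q : ℤ_[p]⟦X⟧ := (p : ℤ_[p]⟦X⟧) ^ l
  set c : ℤ_[p]⟦X⟧ := (p : ℤ_[p]⟦X⟧) ^ ((k - 2) / (p - 1))
  have htrace : (P0mat p k).trace = X * c := by
    simp [P0mat, Matrix.trace_fin_two, c, mul_comm]
  have hdet : (P0mat p k).det = (p : ℤ_[p]⟦X⟧) ^ (k - 1) := by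
    simp [P0mat, Matrix.det_fin_two]
  have hq : ((p : ℤ_[p]) ^ l) ^ 2 ≠ 1 := by
    rw [← pow_mul]
    exact_mod_cast (Nat.one_lt_pow (by omega) (Fact.out : p.Prime).one_lt).ne'
  refine Matrix.eq_zero_of_smul_eq_X_smul_mul (d := (P0mat p k).det * (1 - q ^ 2))
    (A := (c * (q - q ^ 2)) • P0mat p k) ?_ ?_
  · simp [hdet, q, sub_eq_zero, hq.symm, (Fact.out : p.Prime).ne_zero]
  · rw [← Matrix.trace_mul_smul_mul_eq_det_mul_smul_of_mul_eq_smul_mul hH, htrace,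
      Matrix.smul_mul, smul_smul, mul_assoc]

theorem statement11 (p : ℕ) [Fact p.Prime] (k : ℕ) (hk : 2 ≤ k)
    (l : ℕ) (hl : 1 ≤ l)
    (H : Matrix (Fin 2) (Fin 2) (PowerSeries ℤ_[p]))
    (hH : H * P0mat p k = (p : PowerSeries ℤ_[p]) ^ l • (P0mat p k * H)) :
    H = 0 :=
  statement11_general p k l hl H hH
end

section
/- For every integer ℓ ≥ k, the Z_p[[X]]-linear map from M_2(Z_p[[X]]) to itself sending H to H − p^{ℓ−k}·P_0·H·adj(P_0) is bijective, where adj(P_0) is the adjugate matrix of P_0 (so that, since det P_0 = p^{k−1}, this map is H ↦ H − P_0·H·(p^{ℓ−1}·P_0^{−1})). -/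
open PowerSeries Filter Finset

/-!
Under `vec`, `H ↦ H - c • (P * H * adj P)` is multiplication by `1 - c • ((adj P)ᵀ ⊗ₖ P)`.
Since `H ↦ P * H * adj P` has eigenvalues `det P, det P, λ₁², λ₂²` (`λᵢ` the eigenvalues of `P`),
this determinant is `(1 - c det P)² ((1 + c det P)² - c (tr P)²)`. For `P = P₀` the trace `p^m X`
has no constant term and `c det P₀ ∈ pℤ_p`, so the constant coefficient of the determinant is
`(1 - (c det P₀)²)²`, a unit of `ℤ_p`.
-/

open Matrix
open scoped Kronecker

theorem Matrix.bijective_sub_smul_mul_mul_of_isUnit_det {n R : Type*} [Fintype n]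
    [DecidableEq n] [CommRing R] (c : R) (A B : Matrix n n R)
    (h : IsUnit (1 - c • (Bᵀ ⊗ₖ A)).det) :
    Function.Bijective fun H : Matrix n n R => H - c • (A * H * B) := by
  have hM : IsUnit (1 - c • (Bᵀ ⊗ₖ A)) := (isUnit_iff_isUnit_det _).mpr h
  have hvec : vec ∘ (fun H : Matrix n n R => H - c • (A * H * B))
      = (1 - c • (Bᵀ ⊗ₖ A)).mulVec ∘ vec := by
    funext H
    simp [sub_mulVec, smul_mulVec, kronecker_mulVec_vec, vec_sub, vec_smul]
  rw [← vec_bijective.of_comp_iff', hvec]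
  exact Function.Bijective.comp
    ⟨mulVec_injective_of_isUnit hM, mulVec_surjective_iff_isUnit.mpr hM⟩ vec_bijective

theorem Matrix.det_one_sub_smul_kronecker_adjugate {R : Type*} [CommRing R] (c : R)
    (P : Matrix (Fin 2) (Fin 2) R) :
    (1 - c • (P.adjugateᵀ ⊗ₖ P)).det
      = (1 - c * P.det) ^ 2 * ((1 + c * P.det) ^ 2 - c * P.trace ^ 2) := by
  obtain ⟨a, b, d, e, rfl⟩ : ∃ a b d e, P = !![a, b; d, e] := ⟨_, _, _, _, P.eta_fin_two⟩
  have h : reindex finProdFinEquiv finProdFinEquiv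
      (1 - c • ((adjugate !![a, b; d, e])ᵀ ⊗ₖ !![a, b; d, e]))
      = !![1 - c * e * a, -(c * e * b), c * d * a, c * d * b;
           -(c * e * d), 1 - c * e * e, c * d * d, c * d * e;
           c * b * a, c * b * b, 1 - c * a * a, -(c * a * b);
           c * b * d, c * b * e, -(c * a * d), 1 - c * a * e] := by
    ext i j
    fin_cases i <;> fin_cases j <;>
      simp [adjugate_fin_two, finProdFinEquiv, Fin.divNat, Fin.modNat] <;> ring
  rw [← det_reindex_self finProdFinEquiv, h, det_succ_row_zero]
  simp (disch := decide) [Fin.sum_univ_succ, det_fin_three, trace_fin_two,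
    Fin.succAbove_of_le_castSucc, Fin.succAbove_of_castSucc_lt]
  ring

theorem statement12_general (p : ℕ) [Fact p.Prime] (k : ℕ) (hk : 2 ≤ k)
    (l : ℕ) :
    Function.Bijective (fun H : Matrix (Fin 2) (Fin 2) (PowerSeries ℤ_[p]) =>
      H - (p : PowerSeries ℤ_[p]) ^ (l - k) • (P0mat p k * H * (P0mat p k).adjugate)) := by
  refine bijective_sub_smul_mul_mul_of_isUnit_det _ _ _ ?_
  have hdet : constantCoeff (P0mat p k).det = (p : ℤ_[p]) ^ (k - 1) := by
    simp [P0mat, det_fin_two]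
  have htrace : constantCoeff (P0mat p k).trace = 0 := by
    simp [P0mat, trace_fin_two]
  have hconst : constantCoeff (1 - (p : PowerSeries ℤ_[p]) ^ (l - k) •
      ((P0mat p k).adjugateᵀ ⊗ₖ P0mat p k)).det
      = (1 - ((p : ℤ_[p]) ^ (l - k) * (p : ℤ_[p]) ^ (k - 1)) ^ 2) ^ 2 := by
    rw [det_one_sub_smul_kronecker_adjugate]
    simp only [map_mul, map_pow, map_sub, map_add, map_one, map_natCast, hdet, htrace]
    ring
  have hq : (p : ℤ_[p]) ^ (k - 1) ∈ nonunits ℤ_[p] := by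
    obtain ⟨j, hj⟩ : ∃ j, k - 1 = j + 1 := ⟨k - 2, by omega⟩
    rw [hj, pow_succ]
    exact mul_mem_nonunits_right PadicInt.p_nonunit
  rw [isUnit_iff_constantCoeff, hconst]
  refine (IsLocalRing.isUnit_one_sub_self_of_mem_nonunits _ ?_).pow 2
  rw [sq]
  exact mul_mem_nonunits_left (mul_mem_nonunits_right hq)

theorem statement12 (p : ℕ) [Fact p.Prime] (k : ℕ) (hk : 2 ≤ k)
    (l : ℕ) (hl : k ≤ l) :
    Function.Bijective (fun H : Matrix (Fin 2) (Fin 2) (PowerSeries ℤ_[p]) =>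
      H - (p : PowerSeries ℤ_[p]) ^ (l - k) • (P0mat p k * H * (P0mat p k).adjugate)) :=
  statement12_general p k hk l
end

section
/- Let c, d ∈ Z_p^× and suppose G_c, G_d, G_{cd} ∈ M_2(Z_p[[π,X]]) each satisfy G_e ≡ Id mod π and P(X)·φ(G_e) = G_e·γ_e(P(X)), for e = c, d and cd respectively (note γ_c ∘ γ_d = γ_{cd}). Then G_{cd} = G_c·γ_c(G_d). -/
open PowerSeries Filter Finset

/-! Both `G_{cd}` and `G_c · γ_c(G_d)` solve `P · φ(G) = G · γ_{cd}(P)`, because `φ = γ_p` commutes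
with `γ_c` and `γ_c ∘ γ_d = γ_{cd}`; the latter holds since `(1 + π)^c` is the unique solution of
`(1 + π) f' = c f` with `f(0) = 1`. Both are `≡ 1 mod π`, so their difference `D` solves the
homogeneous equation and vanishes mod `π`. In the lowest-order coefficient `D_{ij}` of `π^i X^j`,
`φ` acts as `p^i` and `P` as `P₀ = [[0, -1], [p^{k-1}, 0]]`, so `p^i P₀ D_{ij} = D_{ij} P₀`;
since `P₀² = -p^{k-1}` is scalar, `(p^{2i} - 1) D_{ij} = 0` and `D = 0`. -/
namespace PowerSeries

variable {A : Type*} [CommRing A]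

theorem psSubst_eq_subst {g : A⟦X⟧} (hg : constantCoeff g = 0) (f : A⟦X⟧) :
    psSubst g f = f.subst g := by
  ext j
  rw [coeff_subst' (HasSubst.of_constantCoeff_zero' hg),
    finsum_eq_sum_of_support_subset _ (s := range (j + 1)) ?_]
  · simp [psSubst, smul_eq_mul]
  · intro d hd
    rw [Function.mem_support] at hd
    rw [coe_range, Set.mem_Iio, Nat.lt_succ_iff]
    by_contra hjd
    refine hd ?_
    rw [coeff_of_lt_order j, smul_zero]
    exact (Nat.cast_lt.mpr (not_le.mp hjd)).trans_le (le_order_pow_of_constantCoeff_eq_zero d hg)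

theorem constantCoeff_psSubst (g f : A⟦X⟧) : constantCoeff (psSubst g f) = constantCoeff f := by
  rw [← coeff_zero_eq_constantCoeff_apply, psSubst, coeff_mk]
  simp

theorem constantCoeff_map {S : Type*} [CommRing S] (f : A →+* S) (φ : A⟦X⟧) :
    constantCoeff (map f φ) = f (constantCoeff φ) := by
  rw [← coeff_zero_eq_constantCoeff_apply, coeff_map, coeff_zero_eq_constantCoeff_apply]

theorem coeff_one_add_X_mul_derivative (f : A⟦X⟧) (n : ℕ) :
    coeff n ((1 + X) * d⁄dX A f) = coeff (n + 1) f * (n + 1) + coeff n f * n := by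
  cases n with
  | zero => simpa [add_mul] using coeff_derivative f 0
  | succ m => simp [add_mul, coeff_derivative, coeff_succ_X_mul]

theorem eq_of_one_add_X_mul_derivative_eq_smul {K : Type*} [Field K] [CharZero K]
    {f g : K⟦X⟧} {s : K} (hf : (1 + X) * d⁄dX K f = s • f) (hg : (1 + X) * d⁄dX K g = s • g)
    (h0 : constantCoeff f = constantCoeff g) : f = g := by
  rw [← sub_eq_zero]
  have hfg : (1 + X) * d⁄dX K (f - g) = s • (f - g) := by
    rw [map_sub, mul_sub, hf, hg, smul_sub]
  ext n
  rw [map_zero]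
  induction n with
  | zero => rw [coeff_zero_eq_constantCoeff_apply, map_sub, h0, sub_self]
  | succ n ih =>
    have hn := congrArg (coeff n) hfg
    rw [coeff_one_add_X_mul_derivative, coeff_smul, ih, zero_mul, smul_zero, add_zero] at hn
    exact (mul_eq_zero.mp hn).resolve_right (Nat.cast_add_one_ne_zero n)

end PowerSeries

namespace Matrix

variable {n R S : Type*} [CommRing R] [CommRing S]

theorem eq_zero_of_smul_mul_eq_mul [Fintype n] [DecidableEq n] [IsDomain R] {P M : Matrix n n R}
    {s κ : R} (hP : P * P = s • 1) (hs : s ≠ 0) (hκ : κ * κ ≠ 1) (h : κ • (P * M) = M * P) :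
    M = 0 := by
  have h' : (κ * κ - 1) • s • M = 0 := by
    rw [sub_smul, one_smul, sub_eq_zero]
    calc (κ * κ) • s • M = κ • (P * (κ • (P * M))) := by
          rw [mul_smul_comm, ← Matrix.mul_assoc, hP, smul_smul, smul_mul, Matrix.one_mul,
            smul_smul, smul_smul]
      _ = s • M := by
          rw [h, ← Matrix.mul_assoc, ← smul_mul, h, Matrix.mul_assoc, hP, Matrix.mul_smul,
            Matrix.mul_one]
  rcases smul_eq_zero.mp h' with h | h
  · exact absurd (sub_eq_zero.mp h) hκ
  · exact (smul_eq_zero.mp h).resolve_left hs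

theorem X_pow_smul_cancel {k : ℕ} {M N : Matrix n n R⟦X⟧}
    (h : (X ^ k : R⟦X⟧) • M = (X ^ k : R⟦X⟧) • N) : M = N :=
  Matrix.ext fun i j => X_pow_mul_cancel (congrFun (congrFun h i) j)

theorem exists_eq_X_smul_of_map_constantCoeff {M : Matrix n n R⟦X⟧}
    (h : M.map constantCoeff = 0) : ∃ N : Matrix n n R⟦X⟧, M = (X : R⟦X⟧) • N := by
  choose N hN using fun i j => X_dvd_iff.mpr (congrFun (congrFun h i) j)
  exact ⟨Matrix.of N, Matrix.ext hN⟩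

theorem eq_zero_of_forall_eq_X_pow_smul {M : Matrix n n R⟦X⟧}
    (h : ∀ k, ∃ N : Matrix n n R⟦X⟧, M = (X ^ k : R⟦X⟧) • N) : M = 0 := by
  ext i j m
  obtain ⟨N, rfl⟩ := h (m + 1)
  simp [coeff_X_pow_mul']

theorem eq_zero_of_X_adic_induction {M : Matrix n n R⟦X⟧}
    (step : ∀ k (N : Matrix n n R⟦X⟧), M = (X ^ k : R⟦X⟧) • N → N.map constantCoeff = 0) :
    M = 0 := by
  refine eq_zero_of_forall_eq_X_pow_smul fun k => ?_
  induction k with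
  | zero => exact ⟨M, by rw [pow_zero, one_smul]⟩
  | succ k ih =>
    obtain ⟨N, hN⟩ := ih
    obtain ⟨N', rfl⟩ := exists_eq_X_smul_of_map_constantCoeff (step k N hN)
    exact ⟨N', by rw [hN, smul_smul, pow_succ]⟩

/-- If `M = X^k N`, then `N(0)` solves `κ^k P N(0) = N(0) P` with `κ = u(0)`. -/
theorem eq_zero_of_mul_map_eq_mul_of_contracting [Fintype n] [DecidableEq n] [IsDomain R]
    {σ : R⟦X⟧ →+* R⟦X⟧} {u : R⟦X⟧} (hσX : σ X = X * u)
    (hσ : ∀ f, constantCoeff (σ f) = constantCoeff f) (hu : ∀ i ≠ 0, constantCoeff u ^ i ≠ 1)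
    {P : Matrix n n R} {s : R} (hP : P * P = s • 1) (hs : s ≠ 0)
    {A B M : Matrix n n R⟦X⟧} (hA : A.map constantCoeff = P) (hB : B.map constantCoeff = P)
    (hM : M.map constantCoeff = 0) (h : A * M.map σ = M * B) : M = 0 := by
  refine eq_zero_of_X_adic_induction fun k N hN => ?_
  cases k with
  | zero => rw [pow_zero, one_smul] at hN; rwa [← hN]
  | succ k =>
    subst hN
    have hN : A * (u ^ (k + 1) • N.map σ) = N * B := by
      refine X_pow_smul_cancel (k := k + 1) ?_
      rw [mul_smul_comm, smul_smul, ← mul_pow, ← hσX, ← map_pow, ← mul_smul_comm,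
        ← Matrix.map_smul' _ _ _ (map_mul σ), h, smul_mul]
    have hσ' : (N.map σ).map constantCoeff = N.map constantCoeff := by
      rw [Matrix.map_map]; exact congrArg N.map (funext hσ)
    have h0 := congrArg (Matrix.map · constantCoeff) hN
    simp only [Matrix.map_mul, Matrix.map_smul' _ _ _ (map_mul constantCoeff), hσ', map_pow,
      hA, hB] at h0
    refine eq_zero_of_smul_mul_eq_mul hP hs ?_ (by rwa [← mul_smul_comm])
    rw [← pow_add]
    exact hu _ (by omega)

theorem map_map_constantCoeff (f : R →+* S) (M : Matrix n n R⟦X⟧) :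
    (M.map (PowerSeries.map f)).map constantCoeff = (M.map constantCoeff).map f := by
  simp only [Matrix.map_map]
  exact congrArg M.map (funext (constantCoeff_map f))

theorem eq_zero_of_mul_map_map_eq_mul [Fintype n] {τ : R →+* R} {ρ : R →+* S}
    {A B M : Matrix n n R⟦X⟧}
    (hred : ∀ N : Matrix n n R, N.map ρ = 0 →
      A.map constantCoeff * N.map τ = N * B.map constantCoeff → N = 0)
    (hM : M.map (PowerSeries.map ρ) = 0) (h : A * M.map (PowerSeries.map τ) = M * B) :
    M = 0 := by
  refine eq_zero_of_X_adic_induction fun k N hN => ?_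
  subst hN
  have hNτ : A * N.map (PowerSeries.map τ) = N * B := by
    refine X_pow_smul_cancel (k := k) ?_
    rw [← mul_smul_comm, ← smul_mul, ← h, Matrix.map_smul' _ _ _ (map_mul _), map_pow, map_X]
  have hNρ : N.map (PowerSeries.map ρ) = 0 := by
    refine X_pow_smul_cancel (k := k) ?_
    rw [smul_zero, ← hM, Matrix.map_smul' _ _ _ (map_mul _), map_pow, map_X]
  refine hred _ ?_ ?_
  · rw [← map_map_constantCoeff, hNρ, Matrix.map_zero _ (map_zero _)]
  · rw [← map_map_constantCoeff, ← Matrix.map_mul, hNτ, Matrix.map_mul]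

theorem mul_map_cocycle [Fintype n] {φ γ γ' : R →+* R}
    (hφγ : φ.comp γ = γ.comp φ) {P G G' : Matrix n n R}
    (h : P * G.map φ = G * P.map γ) (h' : P * G'.map φ = G' * P.map γ') :
    P * (G * G'.map γ).map φ = G * G'.map γ * P.map (γ.comp γ') := by
  have hmap : (G'.map γ).map φ = (G'.map φ).map γ := by
    rw [Matrix.map_map, Matrix.map_map, ← RingHom.coe_comp, hφγ, RingHom.coe_comp]
  calc P * (G * G'.map γ).map φ = P * G.map φ * (G'.map φ).map γ := by
        rw [Matrix.map_mul, hmap, Matrix.mul_assoc]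
    _ = G * (P * G'.map φ).map γ := by
        rw [h, Matrix.map_mul, Matrix.mul_assoc]
    _ = G * G'.map γ * P.map (γ.comp γ') := by
        rw [h', Matrix.map_mul, Matrix.map_map, ← RingHom.coe_comp, Matrix.mul_assoc]

end Matrix

section

variable {p : ℕ} [Fact p.Prime]

theorem binomC_succ_mul (c : ℤ_[p]) (n : ℕ) :
    binomC p c (n + 1) * (n + 1) = binomC p c n * ((c : ℚ_[p]) - n) := by
  have hn : (n.factorial : ℚ_[p]) ≠ 0 := Nat.cast_ne_zero.mpr n.factorial_ne_zero
  simp only [binomC, descPochhammer_succ_eval, Nat.factorial_succ, Nat.cast_mul]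
  field_simp
  push_cast
  ring

theorem one_add_X_mul_derivative_onePlusPiPow (c : ℤ_[p]) :
    (1 + X) * d⁄dX ℚ_[p] (onePlusPiPow p c) = (c : ℚ_[p]) • onePlusPiPow p c := by
  ext n
  rw [coeff_one_add_X_mul_derivative, coeff_smul, onePlusPiPow, coeff_mk, coeff_mk,
    binomC_succ_mul, smul_eq_mul]
  ring

theorem constantCoeff_onePlusPiPow (c : ℤ_[p]) : constantCoeff (onePlusPiPow p c) = 1 := by
  simp [← coeff_zero_eq_constantCoeff_apply, onePlusPiPow, binomC]

theorem eq_onePlusPiPow_of_derivative {c : ℤ_[p]} {f : ℚ_[p]⟦X⟧}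
    (hf : (1 + X) * d⁄dX ℚ_[p] f = (c : ℚ_[p]) • f) (h0 : constantCoeff f = 1) :
    f = onePlusPiPow p c :=
  eq_of_one_add_X_mul_derivative_eq_smul hf (one_add_X_mul_derivative_onePlusPiPow c)
    (h0.trans (constantCoeff_onePlusPiPow c).symm)

theorem onePlusPiPow_natCast (m : ℕ) : onePlusPiPow p m = (1 + X) ^ m := by
  refine (eq_onePlusPiPow_of_derivative ?_ (by simp)).symm
  rw [derivative_pow, map_add, derivative_X, derivative_one, PadicInt.coe_natCast]
  cases m with
  | zero => simp
  | succ m => rw [smul_eq_C_mul, map_natCast, Nat.add_sub_cancel]; ring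

theorem constantCoeff_onePlusPiPow_sub_one (c : ℤ_[p]) :
    constantCoeff (onePlusPiPow p c - 1) = 0 := by
  rw [map_sub, constantCoeff_onePlusPiPow, map_one, sub_self]

theorem hasSubst_onePlusPiPow_sub_one (c : ℤ_[p]) : HasSubst (onePlusPiPow p c - 1) :=
  HasSubst.of_constantCoeff_zero' (constantCoeff_onePlusPiPow_sub_one c)

/-- Both sides solve `(1 + π) f' = cd · f` with `f(0) = 1`, the left one by the chain rule. -/
theorem subst_onePlusPiPow (c d : ℤ_[p]) :
    (onePlusPiPow p d).subst (onePlusPiPow p c - 1) = onePlusPiPow p (c * d) := by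
  have hs := hasSubst_onePlusPiPow_sub_one c
  have hsubst : ∀ f : ℚ_[p]⟦X⟧, f.subst (onePlusPiPow p c - 1) = substAlgHom hs f := fun f => by
    rw [coe_substAlgHom]
  apply eq_onePlusPiPow_of_derivative
  · have h1X : substAlgHom hs (1 + X : ℚ_[p]⟦X⟧) = onePlusPiPow p c := by
      rw [map_add, map_one, ← hsubst, subst_X hs, add_sub_cancel]
    rw [derivative_subst hs, hsubst, hsubst, map_sub, derivative_one, sub_zero, mul_left_comm,
      one_add_X_mul_derivative_onePlusPiPow]
    calc substAlgHom hs (d⁄dX ℚ_[p] (onePlusPiPow p d)) * ((c : ℚ_[p]) • onePlusPiPow p c)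
        = (c : ℚ_[p]) • substAlgHom hs ((1 + X) * d⁄dX ℚ_[p] (onePlusPiPow p d)) := by
          rw [map_mul, h1X, mul_smul_comm, mul_comm]
      _ = _ := by
          rw [one_add_X_mul_derivative_onePlusPiPow, map_smul, smul_smul, PadicInt.coe_mul]
  · rw [← psSubst_eq_subst (constantCoeff_onePlusPiPow_sub_one c), constantCoeff_psSubst,
      constantCoeff_onePlusPiPow]

noncomputable def gammaHom (c : ℤ_[p]) : ℚ_[p]⟦X⟧ →+* ℚ_[p]⟦X⟧ :=
  (substAlgHom (hasSubst_onePlusPiPow_sub_one c)).toRingHom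

theorem coe_gammaHom (c : ℤ_[p]) : ⇑(gammaHom c) = gammaQ p c := by
  ext1 f
  rw [gammaQ, psSubst_eq_subst (constantCoeff_onePlusPiPow_sub_one c)]
  exact congrFun (coe_substAlgHom _) f

theorem constantCoeff_gammaHom (c : ℤ_[p]) (f : ℚ_[p]⟦X⟧) :
    constantCoeff (gammaHom c f) = constantCoeff f := by
  rw [coe_gammaHom]
  exact constantCoeff_psSubst _ _

theorem constantCoeff_comp_gammaHom (c : ℤ_[p]) : constantCoeff.comp (gammaHom c) = constantCoeff :=
  RingHom.ext (constantCoeff_gammaHom c)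

theorem gammaHom_comp (c d : ℤ_[p]) : (gammaHom c).comp (gammaHom d) = gammaHom (c * d) := by
  have hc := hasSubst_onePlusPiPow_sub_one c
  have hd := hasSubst_onePlusPiPow_sub_one d
  ext1 f
  change substAlgHom hc (substAlgHom hd f) = substAlgHom _ f
  rw [coe_substAlgHom, coe_substAlgHom, coe_substAlgHom, subst_comp_subst_apply hd hc,
    subst_sub hc, subst_onePlusPiPow, ← coe_substAlgHom hc, map_one]

theorem gammaHom_natCast_X (m : ℕ) : gammaHom (m : ℤ_[p]) X = (1 + X) ^ m - 1 := by
  change substAlgHom _ X = _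
  rw [coe_substAlgHom, subst_X (hasSubst_onePlusPiPow_sub_one _), onePlusPiPow_natCast]

theorem phiA_eq_gammaQ : phiA p ℚ_[p] = gammaQ p p := by
  rw [phiA, gammaQ, onePlusPiPow_natCast]

noncomputable def gamma2Hom (c : ℤ_[p]) : PS2 p →+* PS2 p := PowerSeries.map (gammaHom c)

theorem coe_gamma2Hom (c : ℤ_[p]) : ⇑(gamma2Hom c) = gamma2 p c := by
  ext1 F
  ext n : 1
  rw [gamma2, coeff_mk, gamma2Hom, coeff_map, coe_gammaHom]

theorem phi2_eq_gamma2 : phi2 p = gamma2 p p := by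
  ext1 F
  ext n : 1
  rw [phi2, gamma2, coeff_mk, coeff_mk, phiA_eq_gammaQ]

theorem gamma2Hom_comp (c d : ℤ_[p]) :
    (gamma2Hom c).comp (gamma2Hom d) = gamma2Hom (p := p) (c * d) := by
  rw [gamma2Hom, gamma2Hom, gamma2Hom, ← gammaHom_comp, PowerSeries.map_comp]

theorem constantCoeff_eq_of_X_mul_eq {q : ℚ_[p]⟦X⟧} (hq : X * q = (1 + X) ^ p - 1) :
    constantCoeff q = p := by
  have h := congrArg (coeff 1) hq
  rw [← onePlusPiPow_natCast, map_sub, coeff_succ_X_mul] at h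
  simpa [onePlusPiPow, binomC] using h

theorem Pmat_map_constantCoeff_map_constantCoeff {q : ℚ_[p]⟦X⟧} (hq : X * q = (1 + X) ^ p - 1)
    (k : ℕ) (z : ℚ_[p]⟦X⟧) :
    ((Pmat p k q z).map constantCoeff).map constantCoeff = !![0, -1; (p : ℚ_[p]) ^ (k - 1), 0] := by
  ext i j
  fin_cases i <;> fin_cases j <;> simp [Pmat, constantCoeff_eq_of_X_mul_eq hq]

theorem mul_map_phi2_cocycle {c d : ℤ_[p]} {P G G' : Matrix (Fin 2) (Fin 2) (PS2 p)}
    (h : P * G.map (phi2 p) = G * P.map (gamma2 p c))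
    (h' : P * G'.map (phi2 p) = G' * P.map (gamma2 p d)) :
    P * (G * G'.map (gamma2 p c)).map (phi2 p) =
      G * G'.map (gamma2 p c) * P.map (gamma2 p (c * d)) := by
  simp only [phi2_eq_gamma2, ← coe_gamma2Hom, ← gamma2Hom_comp] at h h' ⊢
  exact Matrix.mul_map_cocycle (by rw [gamma2Hom_comp, gamma2Hom_comp, mul_comm]) h h'

theorem ModPiId.map_map_constantCoeff_eq_one {G : Matrix (Fin 2) (Fin 2) (PS2 p)}
    (hG : ModPiId p G) : G.map (PowerSeries.map constantCoeff) = 1 := by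
  obtain ⟨H, -, rfl⟩ := hG
  ext i j : 1
  simp [piVar, Matrix.one_apply]

theorem map_gamma2_map_map_constantCoeff (c : ℤ_[p]) (G : Matrix (Fin 2) (Fin 2) (PS2 p)) :
    (G.map (gamma2 p c)).map (PowerSeries.map constantCoeff) =
      G.map (PowerSeries.map constantCoeff) := by
  rw [← coe_gamma2Hom, gamma2Hom, Matrix.map_map, ← RingHom.coe_comp, ← PowerSeries.map_comp,
    constantCoeff_comp_gammaHom]

theorem eq_of_Pmat_mul_map_phi2_eq {q : ℚ_[p]⟦X⟧} (hq : X * q = (1 + X) ^ p - 1) (k : ℕ)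
    (z : ℚ_[p]⟦X⟧) (e : ℤ_[p]) {G G' : Matrix (Fin 2) (Fin 2) (PS2 p)}
    (h : Pmat p k q z * G.map (phi2 p) = G * (Pmat p k q z).map (gamma2 p e))
    (h' : Pmat p k q z * G'.map (phi2 p) = G' * (Pmat p k q z).map (gamma2 p e))
    (hred : G.map (PowerSeries.map constantCoeff) = G'.map (PowerSeries.map constantCoeff)) :
    G = G' := by
  set P₀ : Matrix (Fin 2) (Fin 2) ℚ_[p] := !![0, -1; (p : ℚ_[p]) ^ (k - 1), 0]
  have hP₀ : P₀ * P₀ = (-(p : ℚ_[p]) ^ (k - 1)) • 1 := by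
    ext i j; fin_cases i <;> fin_cases j <;> simp [P₀]
  have hs : -(p : ℚ_[p]) ^ (k - 1) ≠ 0 :=
    neg_ne_zero.mpr (pow_ne_zero _ (Nat.cast_ne_zero.mpr (Fact.out : p.Prime).ne_zero))
  have hκ : ∀ i ≠ 0, constantCoeff q ^ i ≠ 1 := by
    intro i hi
    rw [constantCoeff_eq_of_X_mul_eq hq]
    exact_mod_cast (Nat.one_lt_pow hi (Fact.out : p.Prime).one_lt).ne'
  have hσX : gammaHom (p : ℤ_[p]) X = X * q := by rw [gammaHom_natCast_X, hq]
  rw [phi2_eq_gamma2, ← coe_gamma2Hom, ← coe_gamma2Hom] at h h'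
  rw [← sub_eq_zero]
  refine Matrix.eq_zero_of_mul_map_map_eq_mul (τ := gammaHom (p : ℤ_[p])) (ρ := constantCoeff)
    (A := Pmat p k q z) (B := (Pmat p k q z).map (gamma2Hom e)) (fun N hN hNeq => ?_) ?_ ?_
  · refine Matrix.eq_zero_of_mul_map_eq_mul_of_contracting hσX (constantCoeff_gammaHom _) hκ hP₀ hs
      (Pmat_map_constantCoeff_map_constantCoeff hq k z) ?_ hN hNeq
    rw [gamma2Hom, Matrix.map_map_constantCoeff, Matrix.map_map, ← RingHom.coe_comp,
      constantCoeff_comp_gammaHom, Pmat_map_constantCoeff_map_constantCoeff hq k z]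
  · rw [Matrix.map_sub _ (map_sub _), hred, sub_self]
  · rw [Matrix.map_sub _ (map_sub _), Matrix.mul_sub, Matrix.sub_mul]
    exact congrArg₂ (· - ·) h h'

end

theorem statement14_general (p : ℕ) [Fact p.Prime] (k : ℕ)
    (q : PowerSeries ℚ_[p]) (hq : PowerSeries.X * q = (1 + PowerSeries.X) ^ p - 1)
    (lamPlus lamMinus : PowerSeries ℚ_[p])
    (c d : ℤ_[p]ˣ)
    (Gc Gd Gcd : Matrix (Fin 2) (Fin 2) (PS2 p))
    (hGc : IsGmat p k q (zSeries p k lamPlus lamMinus) c Gc)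
    (hGd : IsGmat p k q (zSeries p k lamPlus lamMinus) d Gd)
    (hGcd : IsGmat p k q (zSeries p k lamPlus lamMinus) (↑(c * d)) Gcd) :
    Gcd = Gc * Gd.map (gamma2 p c) := by
  obtain ⟨-, hGc₀, hGc⟩ := hGc
  obtain ⟨-, hGd₀, hGd⟩ := hGd
  obtain ⟨-, hGcd₀, hGcd⟩ := hGcd
  rw [Units.val_mul] at hGcd
  refine eq_of_Pmat_mul_map_phi2_eq hq k _ _ hGcd (mul_map_phi2_cocycle hGc hGd) ?_
  rw [hGcd₀.map_map_constantCoeff_eq_one, Matrix.map_mul, map_gamma2_map_map_constantCoeff,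
    hGc₀.map_map_constantCoeff_eq_one, hGd₀.map_map_constantCoeff_eq_one, Matrix.one_mul]

theorem statement14 (p : ℕ) [Fact p.Prime] (k : ℕ) (hk : 2 ≤ k)
    (q : PowerSeries ℚ_[p]) (hq : PowerSeries.X * q = (1 + PowerSeries.X) ^ p - 1)
    (lamPlus lamMinus : PowerSeries ℚ_[p])
    (hplus : CoeffTendsto p (partialPlus p q) lamPlus)
    (hminus : CoeffTendsto p (partialMinus p q) lamMinus)
    (c d : ℤ_[p]ˣ)
    (Gc Gd Gcd : Matrix (Fin 2) (Fin 2) (PS2 p))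
    (hGc : IsGmat p k q (zSeries p k lamPlus lamMinus) c Gc)
    (hGd : IsGmat p k q (zSeries p k lamPlus lamMinus) d Gd)
    (hGcd : IsGmat p k q (zSeries p k lamPlus lamMinus) (↑(c * d)) Gcd) :
    Gcd = Gc * Gd.map (gamma2 p c) :=
  statement14_general p k q hq lamPlus lamMinus c d Gc Gd Gcd hGc hGd hGcd
end

section
/- Let α ∈ m_E and x_1, x_2 ∈ O_E[[π]], and consider for an integer i ≥ 1 the condition D_i: q^i divides −φ(x_2) in O_E[[π]] and q^i divides q^{k−1}·φ(x_1) + α·z·φ(x_2) in O_E[[π]]. Then: (a) for 1 ≤ i ≤ k−1, D_i holds if and only if π^i divides x_2; (b) for i ≥ k, D_i holds if and only if π^{i−(k−1)} divides x_1 and π^i divides x_2. -/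
open PowerSeries Filter Finset

/-!
Both conditions reduce to `q ^ i ∣ φ x ↔ π ^ i ∣ x` in `O_E[[π]]`: once `q ^ i ∣ φ(x₂)`, the term
`α z φ(x₂)` is irrelevant, and `q ^ i ∣ q ^ (k - 1) φ(x₁)` is automatic for `i ≤ k - 1` and means
`q ^ (i - (k - 1)) ∣ φ(x₁)` otherwise. Since `φ(π) = π q`, that equivalence follows by peeling off one
power of `π` at a time, as long as `q` divides no nonzero constant. This holds because
`q ≡ π ^ (p - 1) mod p`: if `q y` is constant, each coefficient of `y` is `p` times a combination of
later ones, so all of them are divisible by every power of `p`, hence vanish because `‖p‖ < 1`.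
-/

theorem pow_dvd_pow_mul_iff {M : Type*} [CommMonoidWithZero M] [IsCancelMulZero M] {a b : M}
    (ha : a ≠ 0) {m i : ℕ} (hmi : m ≤ i) : a ^ i ∣ a ^ m * b ↔ a ^ (i - m) ∣ b := by
  conv_lhs => rw [← Nat.add_sub_cancel' hmi, pow_add]
  exact mul_dvd_mul_iff_left (pow_ne_zero m ha)

theorem dvd_neg_and_dvd_add_mul_iff {R : Type*} [CommRing R] {a b c d : R} :
    (a ∣ -b ∧ a ∣ c + d * b) ↔ (a ∣ b ∧ a ∣ c) := by
  rw [dvd_neg]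
  exact and_congr_right fun hb => dvd_add_left (dvd_mul_of_dvd_right hb d)

namespace PowerSeries

variable {A : Type*} [CommRing A]

theorem subst_X_mul_add_C {g : A⟦X⟧} (hg : constantCoeff g = 0) (f : A⟦X⟧) (c : A) :
    (X * f + C c).subst g = g * f.subst g + C c := by
  have hs := HasSubst.of_constantCoeff_zero' hg
  rw [subst_add hs, subst_mul hs, subst_X hs, subst_C]
  rfl

theorem subst_X_pow_mul {g : A⟦X⟧} (hg : constantCoeff g = 0) (i : ℕ) (f : A⟦X⟧) :
    (X ^ i * f).subst g = g ^ i * f.subst g := by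
  have hs := HasSubst.of_constantCoeff_zero' hg
  rw [subst_mul hs, subst_pow hs, subst_X hs]

theorem C_dvd_of_forall_dvd_coeff {a : A} {f : A⟦X⟧} (h : ∀ n, a ∣ coeff n f) : C a ∣ f := by
  choose g hg using h
  exact ⟨mk g, by ext n; simp [hg n]⟩

theorem dvd_of_dvd_X_mul [IsDomain A] {a f : A⟦X⟧} (ha : constantCoeff a ≠ 0) (h : a ∣ X * f) :
    a ∣ f := by
  have hX : ¬ X ∣ a := by rwa [X_dvd_iff]
  obtain ⟨w, hw⟩ := h
  obtain ⟨w', rfl⟩ := (X_prime.dvd_or_dvd ⟨f, hw.symm⟩).resolve_left hX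
  exact ⟨w', mul_left_cancel₀ X_ne_zero (by rw [hw]; ring)⟩

theorem pow_dvd_subst_X_mul_iff [IsDomain A] {q : A⟦X⟧} (hq0 : constantCoeff q ≠ 0)
    (hC : ∀ c : A, q ∣ C c → c = 0) (i : ℕ) (x : A⟦X⟧) :
    q ^ i ∣ x.subst (X * q) ↔ X ^ i ∣ x := by
  have hXq : constantCoeff (X * q) = 0 := by simp
  refine ⟨fun h => ?_, fun ⟨u, hu⟩ => ⟨X ^ i * u.subst (X * q), ?_⟩⟩
  · induction i generalizing x with
    | zero => simp
    | succ i ih =>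
      set x' := mk fun n => coeff (n + 1) x
      have hx : x = X * x' + C (constantCoeff x) := eq_X_mul_shift_add_const x
      rw [hx, subst_X_mul_add_C hXq] at h
      have hc : constantCoeff x = 0 := by
        refine hC _ ((dvd_add_right ?_).mp (dvd_trans (dvd_pow_self q i.succ_ne_zero) h))
        exact dvd_mul_of_dvd_left (dvd_mul_left q X) _
      have h' : q ^ i ∣ X * x'.subst (X * q) := by
        rw [← mul_dvd_mul_iff_right (ne_zero_of_map hq0), ← pow_succ]
        rw [hc, map_zero, add_zero] at h
        convert h using 1
        ring
      have hqi : constantCoeff (q ^ i) ≠ 0 := by rw [map_pow]; exact pow_ne_zero i hq0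
      rw [hx, hc, map_zero, add_zero, pow_succ']
      exact mul_dvd_mul_left X (ih x' (dvd_of_dvd_X_mul hqi h'))
  · rw [hu, subst_X_pow_mul hXq]
    ring

theorem pow_dvd_coeff_of_mul_eq_C {q : A⟦X⟧} {ϖ : A} {d : ℕ} (hd : d ≠ 0)
    (hq : C ϖ ∣ q - X ^ d) {y : A⟦X⟧} {c : A} (h : q * y = C c) (t n : ℕ) :
    ϖ ^ t ∣ coeff n y := by
  obtain ⟨r, hr⟩ := hq
  have hqr : q = X ^ d + C ϖ * r := by linear_combination hr
  have hrec : ∀ n, coeff n y = -(ϖ * coeff (n + d) (r * y)) := by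
    intro n
    have h' := congrArg (coeff (n + d)) h
    rw [hqr, add_mul, map_add, mul_assoc, coeff_C_mul, coeff_C, if_neg (by omega), mul_comm,
      coeff_mul_X_pow] at h'
    linear_combination h'
  induction t generalizing n with
  | zero => simp
  | succ t ih =>
    rw [hrec, dvd_neg, pow_succ']
    refine mul_dvd_mul_left ϖ ?_
    rw [coeff_mul]
    exact Finset.dvd_sum fun ij _ => dvd_mul_of_dvd_right (ih ij.2) _

variable {p : ℕ} {q : A⟦X⟧}

theorem coeff_eq_choose_of_X_mul_eq (hq : X * q = (1 + X) ^ p - 1) (j : ℕ) :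
    coeff j q = p.choose (j + 1) := by
  have h := congrArg (coeff (j + 1)) hq
  have hpoly : ((1 + X) ^ p : A⟦X⟧) = ((1 + Polynomial.X) ^ p : Polynomial A) := by
    push_cast; rfl
  rw [coeff_succ_X_mul, map_sub, hpoly, Polynomial.coeff_coe, Polynomial.coeff_one_add_X_pow,
    coeff_one, if_neg j.succ_ne_zero, sub_zero] at h
  exact h

theorem constantCoeff_eq_natCast_of_X_mul_eq (hq : X * q = (1 + X) ^ p - 1) :
    constantCoeff q = p := by
  rw [← coeff_zero_eq_constantCoeff_apply, coeff_eq_choose_of_X_mul_eq hq, Nat.choose_one_right]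

theorem C_natCast_dvd_sub_X_pow [hp : Fact p.Prime] (hq : X * q = (1 + X) ^ p - 1) :
    C (p : A) ∣ q - X ^ (p - 1) := by
  refine C_dvd_of_forall_dvd_coeff fun j => ?_
  rw [map_sub, coeff_eq_choose_of_X_mul_eq hq, coeff_X_pow]
  rcases lt_trichotomy j (p - 1) with hj | rfl | hj
  · rw [if_neg hj.ne, sub_zero]
    exact Nat.cast_dvd_cast (hp.out.dvd_choose_self j.succ_ne_zero (by omega))
  · rw [Nat.sub_add_cancel hp.out.one_le, Nat.choose_self, if_pos rfl, Nat.cast_one, sub_self]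
    exact dvd_zero _
  · rw [if_neg hj.ne', Nat.choose_eq_zero_of_lt (by omega), Nat.cast_zero, sub_zero]
    exact dvd_zero _

end PowerSeries

namespace ringOfInt

variable {E : Type*} [NormedField E] [IsUltrametricDist E]

theorem eq_zero_of_forall_pow_dvd {ϖ a : ringOfInt E} (hϖ : ‖(ϖ : E)‖ < 1)
    (h : ∀ t : ℕ, ϖ ^ t ∣ a) : a = 0 := by
  have hle : ∀ t : ℕ, ‖(a : E)‖ ≤ ‖(ϖ : E)‖ ^ t := fun t => by
    obtain ⟨b, rfl⟩ := h t
    rw [Subring.coe_mul, norm_mul, SubmonoidClass.coe_pow, norm_pow]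
    exact mul_le_of_le_one_right (by positivity) b.2
  have hlim := tendsto_pow_atTop_nhds_zero_of_lt_one (norm_nonneg _) hϖ
  exact Subtype.ext (norm_le_zero_iff.mp (ge_of_tendsto' hlim hle))

variable {p : ℕ} [hp : Fact p.Prime] [NormedAlgebra ℚ_[p] E]

theorem norm_natCast : ‖((p : ringOfInt E) : E)‖ = (p : ℝ)⁻¹ := by
  rw [SubringClass.coe_natCast, ← map_natCast (algebraMap ℚ_[p] E), norm_algebraMap',
    Padic.norm_p]

theorem natCast_ne_zero : (p : ringOfInt E) ≠ 0 := fun h => by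
  have hnorm := norm_natCast (p := p) (E := E)
  rw [h, ZeroMemClass.coe_zero, norm_zero] at hnorm
  exact (inv_pos.mpr (Nat.cast_pos.mpr hp.out.pos)).ne hnorm

theorem eq_zero_of_dvd_C {q : (ringOfInt E)⟦X⟧} (hq : X * q = (1 + X) ^ p - 1)
    (c : ringOfInt E) (h : q ∣ C c) : c = 0 := by
  obtain ⟨y, hy⟩ := h
  have hp_lt : ‖((p : ringOfInt E) : E)‖ < 1 := by
    rw [norm_natCast]
    exact inv_lt_one_of_one_lt₀ (Nat.one_lt_cast.mpr hp.out.one_lt)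
  have hy0 : y = 0 := ext fun n => eq_zero_of_forall_pow_dvd hp_lt fun t =>
    pow_dvd_coeff_of_mul_eq_C (Nat.sub_ne_zero_of_lt hp.out.one_lt)
      (C_natCast_dvd_sub_X_pow hq) hy.symm t n
  rw [hy0, mul_zero] at hy
  exact C_injective (hy.trans (map_zero C).symm)

theorem pow_dvd_phiA_iff {q : (ringOfInt E)⟦X⟧} (hq : X * q = (1 + X) ^ p - 1) (i : ℕ)
    (x : (ringOfInt E)⟦X⟧) : q ^ i ∣ phiA p (ringOfInt E) x ↔ X ^ i ∣ x := by
  rw [phiA, ← hq, psSubst_eq_subst (by simp)]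
  exact pow_dvd_subst_X_mul_iff (constantCoeff_eq_natCast_of_X_mul_eq hq ▸ natCast_ne_zero)
    (eq_zero_of_dvd_C hq) i x

end ringOfInt

theorem statement17_general (p : ℕ) [Fact p.Prime] (k : ℕ)
    (E : Type*) [NormedField E] [NormedAlgebra ℚ_[p] E]
    [IsUltrametricDist E]
    (q : PowerSeries (ringOfInt E)) (hq : PowerSeries.X * q = (1 + PowerSeries.X) ^ p - 1)
    (z : PowerSeries (ringOfInt E))
    (α : ringOfInt E)
    (x₁ x₂ : PowerSeries (ringOfInt E)) :
    (∀ i : ℕ, 1 ≤ i → i ≤ k - 1 →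
      ((q ^ i ∣ -(phiA p (ringOfInt E) x₂) ∧
        q ^ i ∣ (q ^ (k - 1) * phiA p (ringOfInt E) x₁
          + PowerSeries.C α * z * phiA p (ringOfInt E) x₂))
        ↔ PowerSeries.X ^ i ∣ x₂)) ∧
    (∀ i : ℕ, k ≤ i →
      ((q ^ i ∣ -(phiA p (ringOfInt E) x₂) ∧
        q ^ i ∣ (q ^ (k - 1) * phiA p (ringOfInt E) x₁
          + PowerSeries.C α * z * phiA p (ringOfInt E) x₂))
        ↔ (PowerSeries.X ^ (i - (k - 1)) ∣ x₁ ∧ PowerSeries.X ^ i ∣ x₂))) := by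
  have hq0 : q ≠ 0 := ne_zero_of_map (f := PowerSeries.constantCoeff) <| by
    rw [PowerSeries.constantCoeff_eq_natCast_of_X_mul_eq hq]
    exact ringOfInt.natCast_ne_zero
  have hφ := ringOfInt.pow_dvd_phiA_iff hq
  refine ⟨fun i _ hik => ?_, fun i hki => ?_⟩
  · rw [dvd_neg_and_dvd_add_mul_iff, hφ]
    exact and_iff_left (dvd_mul_of_dvd_left (pow_dvd_pow q hik) _)
  · rw [dvd_neg_and_dvd_add_mul_iff, hφ, pow_dvd_pow_mul_iff hq0 (by omega), hφ, and_comm]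

theorem statement17 (p : ℕ) [Fact p.Prime] (k : ℕ) (hk : 2 ≤ k)
    (qQ : PowerSeries ℚ_[p]) (hqQ : PowerSeries.X * qQ = (1 + PowerSeries.X) ^ p - 1)
    (lamPlus lamMinus : PowerSeries ℚ_[p])
    (hplus : CoeffTendsto p (partialPlus p qQ) lamPlus)
    (hminus : CoeffTendsto p (partialMinus p qQ) lamMinus)
    (E : Type*) [NormedField E] [NormedAlgebra ℚ_[p] E]
    [FiniteDimensional ℚ_[p] E] [IsUltrametricDist E]
    (q : PowerSeries (ringOfInt E)) (hq : PowerSeries.X * q = (1 + PowerSeries.X) ^ p - 1)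
    (z : PowerSeries (ringOfInt E))
    (hz : ∀ j : ℕ, (PowerSeries.coeff (R := ringOfInt E) j z : E)
        = algebraMap ℚ_[p] E (PowerSeries.coeff j (zSeries p k lamPlus lamMinus)))
    (α : ringOfInt E) (hα : ‖(α : E)‖ < 1)
    (x₁ x₂ : PowerSeries (ringOfInt E)) :
    (∀ i : ℕ, 1 ≤ i → i ≤ k - 1 →
      ((q ^ i ∣ -(phiA p (ringOfInt E) x₂) ∧
        q ^ i ∣ (q ^ (k - 1) * phiA p (ringOfInt E) x₁
          + PowerSeries.C α * z * phiA p (ringOfInt E) x₂))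
        ↔ PowerSeries.X ^ i ∣ x₂)) ∧
    (∀ i : ℕ, k ≤ i →
      ((q ^ i ∣ -(phiA p (ringOfInt E) x₂) ∧
        q ^ i ∣ (q ^ (k - 1) * phiA p (ringOfInt E) x₁
          + PowerSeries.C α * z * phiA p (ringOfInt E) x₂))
        ↔ (PowerSeries.X ^ (i - (k - 1)) ∣ x₁ ∧ PowerSeries.X ^ i ∣ x₂))) :=
  statement17_general p k E q hq z α x₁ x₂
end
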